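/- Let G be a finite simple block graph and let P_1,…,P_ℓ be vertex-disjoint induced paths of G. If P_ind contains an internal strand as a subgraph, then P_ind contains an internal strand that is edge-disjoint from P̲ = P_1 ∪ … ∪ P_ℓ. -/

import Mathlib

open SimpleGraph

/-- An induced path in a simple graph `G`: a walk which is a path and such that the
subgraph of `G` induced on its vertex set equals the path. -/
structure InducedPath {V : Type*} (G : SimpleGraph V) where
  first : V
  last : V
  walk : G.Walk first last
  isPath : walk.IsPath
  induced : ∀ x ∈ walk.support, ∀ y ∈ walk.support, G.Adj x y → s(x, y) ∈ walk.edges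

namespace InducedPath

variable {V : Type*} {G : SimpleGraph V}

/-- The vertex set of an induced path. -/
def vertexSet (P : InducedPath G) : Set V := {v | v ∈ P.walk.support}

/-- The edge set of an induced path. -/
def edgeSet (P : InducedPath G) : Set (Sym2 V) := {e | e ∈ P.walk.edges}

/-- The terminal vertices `∂P` of an induced path. -/
def boundary (P : InducedPath G) : Set V := {P.first, P.last}

/-- The internal vertices `P°` of an induced path. -/
def interior (P : InducedPath G) : Set V := P.vertexSet \ P.boundary

end InducedPath

section FamilyDefs

variable {V : Type*} (G : SimpleGraph V) {ℓ : ℕ}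

/-- `Q` contains `P` as a subgraph. -/
def PathContains (Q P : InducedPath G) : Prop :=
  P.vertexSet ⊆ Q.vertexSet ∧ P.edgeSet ⊆ Q.edgeSet

/-- The vertex set of `P_ind`, the induced subgraph on `⋃ i, V(P i)`. -/
def famVerts (P : Fin ℓ → InducedPath G) : Set V := ⋃ i, (P i).vertexSet

/-- The union of the edge sets of the paths `P i`. -/
def famEdges (P : Fin ℓ → InducedPath G) : Set (Sym2 V) := ⋃ i, (P i).edgeSet

/-- The paths `P i` are pairwise vertex-disjoint. -/
def PairwiseVertexDisjoint (P : Fin ℓ → InducedPath G) : Prop :=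
  ∀ i j : Fin ℓ, i ≠ j → Disjoint (P i).vertexSet (P j).vertexSet

/-- `φ` is an orientation of the induced path `P`, i.e. a surjection `{1,2} → ∂P`. -/
def IsOrientation (P : InducedPath G) (φ : Fin 2 → V) : Prop :=
  Set.range φ = P.boundary

/-- `Q` is an induced path of `P_ind` (equivalently, an induced path of `G` all of whose
vertices belong to `⋃ i, V(P i)`). -/
def IsPathOfInd (P : Fin ℓ → InducedPath G) (Q : InducedPath G) : Prop :=
  Q.vertexSet ⊆ famVerts G P

/-- The data `(P, σ, φ)` is DOIP. -/
def IsDOIPData (P : Fin ℓ → InducedPath G) (σ : Equiv.Perm (Fin ℓ))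
    (φ : Fin ℓ → Fin 2 → V) : Prop :=
  (∀ i, IsOrientation G (P i) (φ i)) ∧
    ∀ i j : Fin ℓ, σ i ≤ σ j → ∀ Q : InducedPath G, IsPathOfInd G P Q →
      ({Q.first, Q.last} : Set V) = {φ (σ i) 0, φ (σ j) 1} →
      ∃ k, PathContains G Q (P k)

/-- The family `P` is DOIP: there exist `σ` and orientations making it DOIP. -/
def FamilyDOIP (P : Fin ℓ → InducedPath G) : Prop :=
  ∃ (σ : Equiv.Perm (Fin ℓ)) (φ : Fin ℓ → Fin 2 → V), IsDOIPData G P σ φ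

/-- `Q` realizes an arc `(i,j)` of the directed multigraph `K_{P_ind}`. -/
def KArcWitness (P : Fin ℓ → InducedPath G) (φ : Fin ℓ → Fin 2 → V) (i j : Fin ℓ)
    (Q : InducedPath G) : Prop :=
  IsPathOfInd G P Q ∧ ({Q.first, Q.last} : Set V) = {φ i 0, φ j 1} ∧
    ∀ k, ¬ PathContains G Q (P k)

/-- `(i,j)` is an arc of `K_{P_ind}`. -/
def KArc (P : Fin ℓ → InducedPath G) (φ : Fin ℓ → Fin 2 → V) (i j : Fin ℓ) : Prop :=
  ∃ Q : InducedPath G, KArcWitness G P φ i j Q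

/-- The directed multigraph `K_{P_ind}` is directed acyclic (no loops and no directed
cycles). -/
def KAcyclic (P : Fin ℓ → InducedPath G) (φ : Fin ℓ → Fin 2 → V) : Prop :=
  ∀ i : Fin ℓ, ¬ Relation.TransGen (KArc G P φ) i i

/-- `Q` is a strand of `P_ind` from `P i` to `P j`. -/
def IsStrand (P : Fin ℓ → InducedPath G) (φ : Fin ℓ → Fin 2 → V) (i j : Fin ℓ)
    (Q : InducedPath G) : Prop :=
  i ≠ j ∧ IsPathOfInd G P Q ∧ Q.first ≠ φ i 1 ∧ Q.last ≠ φ j 0 ∧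
    Q.vertexSet ∩ (P i).vertexSet = {Q.first} ∧
    Q.vertexSet ∩ (P j).vertexSet = {Q.last} ∧
    ∀ k, ¬ PathContains G Q (P k)

/-- `Q` is an internal strand of `P_ind` from `P i` to `P j`. -/
def IsInternalStrand (P : Fin ℓ → InducedPath G) (i j : Fin ℓ) (Q : InducedPath G) : Prop :=
  i ≠ j ∧ IsPathOfInd G P Q ∧
    Q.first ∈ (P i).interior ∧ Q.last ∈ (P j).interior ∧
    Q.vertexSet ∩ (P i).vertexSet = {Q.first} ∧
    Q.vertexSet ∩ (P j).vertexSet = {Q.last} ∧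
    ∀ k, ¬ PathContains G Q (P k)

/-- `(Q, b, c)` is an internal fork of `P_ind` from `P i` to `P j`. -/
def IsInternalFork (P : Fin ℓ → InducedPath G) (i j : Fin ℓ) (Q : InducedPath G)
    (b c : V) : Prop :=
  i ≠ j ∧ IsPathOfInd G P Q ∧ Q.first ∈ (P i).interior ∧
    Q.vertexSet ∩ (P i).vertexSet = {Q.first} ∧
    Q.vertexSet ∩ (P j).vertexSet = ∅ ∧
    b ∈ (P j).vertexSet ∧ c ∈ (P j).vertexSet ∧ b ≠ c ∧
    G.Adj Q.last b ∧ G.Adj Q.last c ∧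
    ∀ k, ¬ PathContains G Q (P k)

/-- `(Q, a, b, c, d)` is a double fork of `P_ind` from `P i` to `P j`. -/
def IsDoubleFork (P : Fin ℓ → InducedPath G) (i j : Fin ℓ) (Q : InducedPath G)
    (a b c d : V) : Prop :=
  i ≠ j ∧ IsPathOfInd G P Q ∧
    Q.vertexSet ∩ (P i).vertexSet = ∅ ∧
    Q.vertexSet ∩ (P j).vertexSet = ∅ ∧
    a ∈ (P i).vertexSet ∧ b ∈ (P i).vertexSet ∧ a ≠ b ∧
    c ∈ (P j).vertexSet ∧ d ∈ (P j).vertexSet ∧ c ≠ d ∧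
    G.Adj Q.first a ∧ G.Adj Q.first b ∧ G.Adj Q.last c ∧ G.Adj Q.last d ∧
    ∀ k, ¬ PathContains G Q (P k)

/-- `(a, b, c, d)` is a complete ladder of `P_ind` between `P i` and `P j`. -/
def IsCompleteLadder (P : Fin ℓ → InducedPath G) (i j : Fin ℓ) (a b c d : V) : Prop :=
  i ≠ j ∧ a ∈ (P i).vertexSet ∧ b ∈ (P i).vertexSet ∧ a ≠ b ∧
    c ∈ (P j).vertexSet ∧ d ∈ (P j).vertexSet ∧ c ≠ d ∧
    G.Adj a b ∧ G.Adj a c ∧ G.Adj a d ∧ G.Adj b c ∧ G.Adj b d ∧ G.Adj c d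

/-- `P_ind` contains an internal strand, an internal fork, a double fork, or a
complete ladder. -/
def HasForbidden (P : Fin ℓ → InducedPath G) : Prop :=
  (∃ i j Q, IsInternalStrand G P i j Q) ∨
  (∃ i j Q b c, IsInternalFork G P i j Q b c) ∨
  (∃ i j Q a b c d, IsDoubleFork G P i j Q a b c d) ∨
  (∃ i j a b c d, IsCompleteLadder G P i j a b c d)

/-- `P_ind` contains a complete ladder, or an internal strand, internal fork, or double
fork which is edge-disjoint from the family `P`. -/
def HasForbiddenEdgeDisjoint (P : Fin ℓ → InducedPath G) : Prop :=
  (∃ i j Q, IsInternalStrand G P i j Q ∧ Disjoint Q.edgeSet (famEdges G P)) ∨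
  (∃ i j Q b c, IsInternalFork G P i j Q b c ∧
    Disjoint (Q.edgeSet ∪ {s(Q.last, b), s(Q.last, c)}) (famEdges G P)) ∨
  (∃ i j Q a b c d, IsDoubleFork G P i j Q a b c d ∧
    Disjoint (Q.edgeSet ∪ {s(Q.first, a), s(Q.first, b), s(Q.last, c), s(Q.last, d)})
      (famEdges G P)) ∨
  (∃ i j a b c d, IsCompleteLadder G P i j a b c d)

end FamilyDefs

section Invariants

variable {V : Type*}

/-- The invariant `ν(G)`: the maximal total number of edges of a family of
vertex-disjoint induced paths of `G` which is DOIP. -/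
noncomputable def nu (G : SimpleGraph V) : ℕ :=
  sSup {n : ℕ | ∃ (ℓ : ℕ) (P : Fin ℓ → InducedPath G),
    PairwiseVertexDisjoint G P ∧ FamilyDOIP G P ∧ n = ∑ i, (P i).walk.length}

/-- `ℓ(G)`: the number of edges of a longest induced path of `G`. -/
noncomputable def longestInducedPathLength (G : SimpleGraph V) : ℕ :=
  sSup {n : ℕ | ∃ P : InducedPath G, n = P.walk.length}

end Invariants

section BlockGraphs

variable {V : Type*} {G : SimpleGraph V}

/-- A subgraph is biconnected if it is connected and remains connected after
deleting any single vertex. -/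
def SubgraphBiconnected (H : G.Subgraph) : Prop :=
  H.coe.Connected ∧ ∀ v : V, ((H.deleteVerts {v}).coe).Connected

/-- A block of `G` is a maximal biconnected subgraph. -/
def IsBlock (H : G.Subgraph) : Prop :=
  SubgraphBiconnected H ∧ ∀ H' : G.Subgraph, SubgraphBiconnected H' → H ≤ H' → H' = H

/-- `G` is a block graph if every block of `G` is a complete graph. -/
def IsBlockGraph (G : SimpleGraph V) : Prop :=
  ∀ H : G.Subgraph, IsBlock H → ∀ a ∈ H.verts, ∀ b ∈ H.verts, a ≠ b → H.Adj a b

/-- The intersection `Q ∩ R` of two induced paths, as a subgraph of `G`. -/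
def pathsInter (Q R : InducedPath G) : G.Subgraph where
  verts := Q.vertexSet ∩ R.vertexSet
  Adj a b := G.Adj a b ∧ s(a, b) ∈ Q.walk.edges ∧ s(a, b) ∈ R.walk.edges
  adj_sub h := h.1
  edge_vert h := ⟨Q.walk.fst_mem_support_of_mem_edges h.2.1,
    R.walk.fst_mem_support_of_mem_edges h.2.2⟩
  symm := by
    constructor
    intro a b h
    refine ⟨h.1.symm, ?_, ?_⟩
    · rw [Sym2.eq_swap]; exact h.2.1
    · rw [Sym2.eq_swap]; exact h.2.2

/-- `s` is a maximal clique of `G`. -/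
def IsMaxClique (G : SimpleGraph V) (s : Set V) : Prop :=
  G.IsClique s ∧ ∀ t : Set V, G.IsClique t → s ⊆ t → s = t

/-- `G` has the two-block property: every vertex belongs to at most two maximal
cliques. -/
def TwoBlockProperty (G : SimpleGraph V) : Prop :=
  ∀ v : V, ({s : Set V | IsMaxClique G s ∧ v ∈ s}).ncard ≤ 2

/-- The completion `G_c` of `G` at the vertex `c`. -/
def completionAt (G : SimpleGraph V) (c : V) : SimpleGraph V where
  Adj u w := G.Adj u w ∨ (u ≠ w ∧ G.Adj c u ∧ G.Adj c w)
  symm := by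
    constructor
    intro u w h
    rcases h with h | ⟨hne, h1, h2⟩
    · exact Or.inl h.symm
    · exact Or.inr ⟨hne.symm, h2, h1⟩
  loopless := by
    constructor
    intro u h
    rcases h with h | ⟨hne, _, _⟩
    · exact G.ne_of_adj h rfl
    · exact hne rfl

/-- The number of connected components of a graph. -/
noncomputable def numComponents (G : SimpleGraph V) : ℕ :=
  Nat.card G.ConnectedComponent

/-- `c` is a cut vertex of `G`: deleting it strictly increases the number of
connected components. -/
def IsCutVertex (G : SimpleGraph V) (c : V) : Prop :=
  numComponents G < numComponents (G.induce ({c}ᶜ : Set V))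

end BlockGraphs


/-! Take an internal strand `Q` of minimal length and suppose it shares an edge with some `P k`;
then `k` is neither end of `Q`. Cutting `Q` at an internal vertex of `P k` would give a shorter
internal strand, so the first and the last vertex of `Q` on `P k` are the two ends of `P k`. In a
block graph two induced paths with the same ends coincide: two different ones contain a cycle,
which lies in a block, so is complete and has a chord. Hence the segment of `Q` between those
vertices is `P k`, and `Q` contains `P k`, which an internal strand does not. -/

namespace SimpleGraph.Walk

variable {V : Type*} {G : SimpleGraph V}

lemma IsSubwalk.toSubgraph_le {u v u' v' : V} {p : G.Walk u v} {q : G.Walk u' v'}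
    (h : p.IsSubwalk q) : p.toSubgraph ≤ q.toSubgraph := by
  obtain ⟨r, s, rfl⟩ := h
  rw [toSubgraph_append, toSubgraph_append]
  exact le_sup_right.trans le_sup_left

lemma mem_support_tail_of_ne {u v x : V} {p : G.Walk u v} (hx : x ∈ p.support) (hxu : x ≠ u) :
    x ∈ p.tail.support := by
  have hn : ¬p.Nil := fun h => hxu (by simpa [nil_iff_support_eq.mp h] using hx)
  rw [support_tail_of_not_nil p hn]
  rw [← cons_tail_support] at hx
  exact (List.mem_cons.mp hx).resolve_left hxu

lemma IsPath.start_notMem_support_tail {u v : V} {p : G.Walk u v} (hp : p.IsPath)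
    (hn : ¬p.Nil) : u ∉ p.tail.support := by
  have hnd := hp.support_nodup
  rw [← cons_tail_support, List.nodup_cons] at hnd
  rw [support_tail_of_not_nil p hn]
  exact hnd.1

lemma IsChordless.reverse {u v : V} {p : G.Walk u v} (h : p.IsChordless) :
    p.reverse.IsChordless := by
  rw [isChordless_iff_forall_mem_edges] at h ⊢
  simp only [support_reverse, edges_reverse, List.mem_reverse]
  exact @h

lemma IsChordless.of_append_left {u v w : V} {p : G.Walk u v} {q : G.Walk v w}
    (hpq : (p.append q).IsPath) (h : (p.append q).IsChordless) : p.IsChordless := by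
  refine isChordless_iff_forall_mem_edges.mpr fun x y hx hy hxy => ?_
  have := h.mem_edges (by simp [hx]) (by simp [hy]) hxy
  rw [edges_append, List.mem_append] at this
  refine this.resolve_right fun hq => hxy.ne ?_
  have hxv := not_not.mp fun hne => hpq.ne_of_mem_support_of_append hne hx
    (q.fst_mem_support_of_mem_edges hq) rfl
  have hyv := not_not.mp fun hne => hpq.ne_of_mem_support_of_append hne hy
    (q.snd_mem_support_of_mem_edges hq) rfl
  rw [hxv, hyv]

lemma IsChordless.of_append_right {u v w : V} {p : G.Walk u v} {q : G.Walk v w}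
    (hpq : (p.append q).IsPath) (h : (p.append q).IsChordless) : q.IsChordless := by
  rw [← isPath_reverse_iff, reverse_append] at hpq
  have h' := h.reverse
  rw [reverse_append] at h'
  simpa using (h'.of_append_left hpq).reverse

lemma IsChordless.of_isSubwalk {u v u' v' : V} {p : G.Walk u v} {q : G.Walk u' v'}
    (hq : q.IsPath) (h : q.IsChordless) (hpq : p.IsSubwalk q) : p.IsChordless := by
  obtain ⟨r, s, rfl⟩ := hpq
  exact (h.of_append_left hq).of_append_right hq.of_append_left

lemma IsPath.length_le_one_of_isChordless {u v : V} {p : G.Walk u v} (hp : p.IsPath)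
    (hc : p.IsChordless) (huv : G.Adj u v) : p.length ≤ 1 := by
  cases p with
  | nil => simp
  | cons h q =>
    rename_i w
    have hq := (cons_isPath_iff h q).mp hp
    have hmem := hc.mem_edges (start_mem_support _) (end_mem_support _) huv
    rw [edges_cons, List.mem_cons] at hmem
    rcases hmem with hmem | hmem
    · obtain rfl : v = w := by
        rcases Sym2.eq_iff.mp hmem with ⟨-, h2⟩ | ⟨h1, -⟩
        · exact h2
        · exact absurd (h1 ▸ q.start_mem_support) hq.2
      simp [length_eq_zero_iff.mpr (isPath_iff_nil.mp hq.1)]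
    · exact absurd (q.fst_mem_support_of_mem_edges hmem) hq.2

lemma exists_append_eq_of_first_mem (S : Set V) {a b : V} (w : G.Walk a b)
    (h : ∃ x ∈ w.support, x ∈ S) :
    ∃ (c : V) (w₁ : G.Walk a c) (w₂ : G.Walk c b), w₁.append w₂ = w ∧ c ∈ S ∧
      ∀ x ∈ w₁.support, x ∈ S → x = c := by
  induction w with
  | nil =>
    obtain ⟨x, hx, hxS⟩ := h
    rw [support_nil, List.mem_singleton] at hx
    subst hx
    exact ⟨_, nil, nil, rfl, hxS, by simp⟩
  | @cons a a' b hadj w ih =>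
    by_cases haS : a ∈ S
    · exact ⟨a, nil, cons hadj w, rfl, haS, by simp⟩
    obtain ⟨x, hx, hxS⟩ := h
    have hx : x ∈ w.support := by
      rw [support_cons, List.mem_cons] at hx
      exact hx.resolve_left (by rintro rfl; exact haS hxS)
    obtain ⟨c, w₁, w₂, rfl, hcS, hfirst⟩ := ih ⟨x, hx, hxS⟩
    refine ⟨c, cons hadj w₁, w₂, rfl, hcS, fun z hz hzS => ?_⟩
    rw [support_cons, List.mem_cons] at hz
    exact hz.elim (by rintro rfl; exact absurd hzS haS) (hfirst z · hzS)

lemma exists_append_append_eq_of_mem (S : Set V) {a b : V} (w : G.Walk a b)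
    (h : ∃ x ∈ w.support, x ∈ S) :
    ∃ (c d : V) (w₁ : G.Walk a c) (s : G.Walk c d) (w₃ : G.Walk d b),
      w₁.append (s.append w₃) = w ∧ c ∈ S ∧ d ∈ S ∧
      (∀ x ∈ w₁.support, x ∈ S → x = c) ∧ (∀ x ∈ w₃.support, x ∈ S → x = d) ∧
      ∀ x ∈ w.support, x ∈ S → x ∈ s.support := by
  obtain ⟨c, w₁, w₂, rfl, hc, hw₁⟩ := w.exists_append_eq_of_first_mem S h
  obtain ⟨d, w₃, s, hw₂, hd, hw₃⟩ :=
    w₂.reverse.exists_append_eq_of_first_mem S ⟨c, by simp, hc⟩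
  rw [← reverse_reverse w₂, ← hw₂, reverse_append]
  refine ⟨c, d, w₁, s.reverse, w₃.reverse, rfl, hc, hd, hw₁, by simpa using hw₃, ?_⟩
  intro x hx hxS
  simp only [mem_support_append_iff, support_reverse, List.mem_reverse] at hx ⊢
  rcases hx with hx | hx | hx
  · exact hw₁ x hx hxS ▸ s.end_mem_support
  · exact hx
  · exact hw₃ x hx hxS ▸ s.start_mem_support

end SimpleGraph.Walk

namespace InducedPath

variable {V : Type*} {G : SimpleGraph V}

lemma isChordless (Q : InducedPath G) : Q.walk.IsChordless :=
  Walk.isChordless_iff_forall_mem_edges.mpr fun x y hx hy hxy => Q.induced x hx y hy hxy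

def ofIsChordless {a b : V} (w : G.Walk a b) (hp : w.IsPath) (hc : w.IsChordless) :
    InducedPath G :=
  ⟨a, b, w, hp, fun _ hx _ hy hxy => hc.mem_edges hx hy hxy⟩

def reverse (Q : InducedPath G) : InducedPath G :=
  ofIsChordless Q.walk.reverse Q.isPath.reverse Q.isChordless.reverse

@[simp] lemma first_reverse (Q : InducedPath G) : Q.reverse.first = Q.last := rfl

@[simp] lemma last_reverse (Q : InducedPath G) : Q.reverse.last = Q.first := rfl

@[simp]
lemma vertexSet_reverse (Q : InducedPath G) : Q.reverse.vertexSet = Q.vertexSet := by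
  ext x
  simp [vertexSet, reverse, ofIsChordless]

@[simp]
lemma edgeSet_reverse (Q : InducedPath G) : Q.reverse.edgeSet = Q.edgeSet := by
  ext e
  simp [edgeSet, reverse, ofIsChordless]

lemma pathContains_of_vertexSet_subset {Q R : InducedPath G} (h : R.vertexSet ⊆ Q.vertexSet) :
    PathContains G Q R := by
  refine ⟨h, fun e he => ?_⟩
  obtain ⟨x, y⟩ := e
  exact Q.induced x (h (R.walk.fst_mem_support_of_mem_edges he))
    y (h (R.walk.snd_mem_support_of_mem_edges he)) (R.walk.adj_of_mem_edges he)

lemma mem_boundary_of_notMem_interior {R : InducedPath G} {u : V}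
    (hu : u ∈ R.vertexSet) (hu' : u ∉ R.interior) : u = R.first ∨ u = R.last := by
  by_contra h
  exact hu' ⟨hu, by simpa [boundary] using h⟩

end InducedPath

section BlockGraph

variable {V : Type*} {G : SimpleGraph V}

lemma SimpleGraph.Subgraph.Connected.connected_deleteVerts_of_le {H K : G.Subgraph} {v : V}
    (hK : K.Connected) (hKH : K ≤ H) (hv : v ∉ K.verts) (hcover : H.verts \ {v} ⊆ K.verts) :
    (H.deleteVerts {v}).Connected := by
  have hle : K ≤ H.deleteVerts {v} :=
    ⟨fun x hx => ⟨hKH.1 hx, fun hxv => hv (hxv ▸ hx)⟩, fun x y hxy =>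
      (Subgraph.deleteVerts_adj).mpr ⟨hKH.1 (K.edge_vert hxy), fun h => hv (h ▸ K.edge_vert hxy),
        hKH.1 (K.edge_vert hxy.symm), fun h => hv (h ▸ K.edge_vert hxy.symm), hKH.2 hxy⟩⟩
  exact hK.mono hle (le_antisymm hle.1 hcover)

lemma SimpleGraph.Walk.IsCycle.subgraphBiconnected {u : V} {c : G.Walk u u} (hc : c.IsCycle) :
    SubgraphBiconnected c.toSubgraph := by
  classical
  refine ⟨Subgraph.connected_iff'.mp c.toSubgraph_connected, fun v => ?_⟩
  rw [← Subgraph.connected_iff']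
  by_cases hv : v ∈ c.support
  swap
  · exact c.toSubgraph_connected.connected_deleteVerts_of_le le_rfl (by simpa using hv)
      Set.sdiff_subset
  set c' := c.rotate v hv
  have hc' : c'.IsCycle := hc.rotate hv
  have hpath : c'.tail.reverse.IsPath := hc'.isPath_tail.reverse
  have hn : ¬c'.tail.reverse.Nil := by
    rw [not_nil_iff_lt_length, length_reverse, length_tail]
    have := hc'.three_le_length
    omega
  rw [← c.toSubgraph_rotate hv]
  refine (c'.tail.reverse.tail.toSubgraph_connected).connected_deleteVerts_of_le ?_ ?_ ?_
  · calc c'.tail.reverse.tail.toSubgraph ≤ c'.tail.reverse.toSubgraph :=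
          ((isSubwalk_rfl _).tail).toSubgraph_le
      _ = c'.tail.toSubgraph := toSubgraph_reverse _
      _ ≤ c'.toSubgraph := ((isSubwalk_rfl _).tail).toSubgraph_le
  · simpa using hpath.start_notMem_support_tail hn
  · rintro x ⟨hx, hxv⟩
    rw [mem_verts_toSubgraph] at hx ⊢
    refine mem_support_tail_of_ne ?_ hxv
    rw [support_reverse, List.mem_reverse]
    exact mem_support_tail_of_ne hx hxv

lemma SubgraphBiconnected.exists_isBlock_le [Finite V] {H : G.Subgraph}
    (hH : SubgraphBiconnected H) : ∃ M : G.Subgraph, IsBlock M ∧ H ≤ M := by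
  obtain ⟨M, ⟨hM, hHM⟩, hmax⟩ :=
    (Set.toFinite {K : G.Subgraph | SubgraphBiconnected K ∧ H ≤ K}).exists_maximalFor id _
      ⟨H, hH, le_rfl⟩
  exact ⟨M, ⟨hM, fun K hK hMK => le_antisymm (hmax ⟨hK, hHM.trans hMK⟩ hMK) hMK⟩, hHM⟩

lemma IsBlockGraph.adj_of_isCycle [Finite V] (hG : IsBlockGraph G) {u x y : V}
    {c : G.Walk u u} (hc : c.IsCycle) (hx : x ∈ c.support) (hy : y ∈ c.support) (hxy : x ≠ y) :
    G.Adj x y := by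
  obtain ⟨M, hM, hcM⟩ := hc.subgraphBiconnected.exists_isBlock_le
  exact (hG M hM x (hcM.1 ((c.mem_verts_toSubgraph).mpr hx))
    y (hcM.1 ((c.mem_verts_toSubgraph).mpr hy)) hxy).adj_sub

lemma IsBlockGraph.eq_of_isChordless [Finite V] (hG : IsBlockGraph G) {u v : V}
    {R S : G.Walk u v} (hR : R.IsPath) (hRc : R.IsChordless) (hS : S.IsPath)
    (hSc : S.IsChordless) : R = S := by
  by_contra hne
  obtain ⟨u', v', p, q, hpR, hqS, hcyc⟩ := hR.exists_isCycle_of_ne hS hne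
  have hp := Walk.isPath_of_isSubwalk hpR hR
  have hq := Walk.isPath_of_isSubwalk hqS hS
  have hlen := hcyc.three_le_length
  rw [Walk.length_append, Walk.length_reverse] at hlen
  have huv : u' ≠ v' := by
    rintro rfl
    simp [Walk.length_eq_zero_iff.mpr (Walk.isPath_iff_nil.mp hp),
      Walk.length_eq_zero_iff.mpr (Walk.isPath_iff_nil.mp hq)] at hlen
  have hadj : G.Adj u' v' := hG.adj_of_isCycle hcyc (by simp) (by simp) huv
  have := hp.length_le_one_of_isChordless (hRc.of_isSubwalk hR hpR) hadj
  have := hq.length_le_one_of_isChordless (hSc.of_isSubwalk hS hqS) hadj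
  omega

lemma IsBlockGraph.pathContains_of_isSubwalk [Finite V] (hG : IsBlockGraph G)
    {Q R : InducedPath G} {u v : V} {s : G.Walk u v} (hs : s.IsSubwalk Q.walk)
    (hu : u = R.first ∨ u = R.last) (hv : v = R.first ∨ v = R.last) (huv : u ≠ v) :
    PathContains G Q R := by
  have hpath : s.IsPath := Walk.isPath_of_isSubwalk hs Q.isPath
  have hsc : s.IsChordless := Q.isChordless.of_isSubwalk Q.isPath hs
  suffices ∀ t : G.Walk R.first R.last, t.IsPath → t.IsChordless →
      t.support ⊆ Q.walk.support → PathContains G Q R by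
    rcases hu with rfl | rfl <;> rcases hv with rfl | rfl
    · exact absurd rfl huv
    · exact this s hpath hsc hs.support_subset
    · exact this s.reverse hpath.reverse hsc.reverse (by simpa using hs.support_subset)
    · exact absurd rfl huv
  intro t ht htc htQ
  exact InducedPath.pathContains_of_vertexSet_subset fun _ hx =>
    htQ (hG.eq_of_isChordless R.isPath R.isChordless ht htc ▸ hx)

end BlockGraph

section InternalStrand

variable {V : Type*} {G : SimpleGraph V} {ℓ : ℕ} {P : Fin ℓ → InducedPath G}
  {i j k : Fin ℓ} {Q : InducedPath G}

lemma IsInternalStrand.reverse (h : IsInternalStrand G P i j Q) :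
    IsInternalStrand G P j i Q.reverse := by
  obtain ⟨hij, hind, hfirst, hlast, hi, hj, hnc⟩ := h
  refine ⟨hij.symm, by simpa [IsPathOfInd] using hind, hlast, hfirst, by simpa using hj,
    by simpa using hi, fun k hk => hnc k (by simpa [PathContains] using hk)⟩

lemma IsInternalStrand.exists_shorter_of_append (hdisj : PairwiseVertexDisjoint G P)
    (hQ : IsInternalStrand G P i j Q) (hik : i ≠ k) (hkj : k ≠ j) {c : V}
    {w₁ : G.Walk Q.first c} {w₂ : G.Walk c Q.last} (hw : w₁.append w₂ = Q.walk)
    (hc : c ∈ (P k).interior) (hw₁ : ∀ x ∈ w₁.support, x ∈ (P k).vertexSet → x = c) :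
    ∃ Q' : InducedPath G, IsInternalStrand G P i k Q' ∧ Q'.walk.length < Q.walk.length := by
  obtain ⟨-, hind, hfirst, hlast, hi, -, hnc⟩ := hQ
  have hpath : (w₁.append w₂).IsPath := hw ▸ Q.isPath
  have hsub : w₁.support ⊆ Q.walk.support := fun x hx => by simp [← hw, hx]
  refine ⟨.ofIsChordless w₁ hpath.of_append_left
    ((hw ▸ Q.isChordless).of_append_left hpath), ⟨hik, fun x hx => hind (hsub hx), hfirst, hc,
    Set.eq_singleton_iff_unique_mem.mpr ⟨⟨w₁.start_mem_support, hfirst.1⟩,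
      fun x hx => hi.subset ⟨hsub hx.1, hx.2⟩⟩,
    Set.eq_singleton_iff_unique_mem.mpr ⟨⟨w₁.end_mem_support, hc.1⟩, fun x hx => hw₁ x hx.1 hx.2⟩,
    fun k' hk' => hnc k' ⟨hk'.1.trans hsub, hk'.2.trans fun e he => ?_⟩⟩, ?_⟩
  · simp [InducedPath.edgeSet, ← hw, show e ∈ w₁.edges from he]
  · have hne : c ≠ Q.last := fun h => Set.disjoint_left.mp (hdisj k j hkj) hc.1 (h ▸ hlast.1)
    have hw₂ : 0 < w₂.length := Walk.not_nil_iff_lt_length.mp fun h => hne h.eq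
    simp only [InducedPath.ofIsChordless, ← hw, Walk.length_append]
    omega

lemma IsInternalStrand.exists_shorter_of_append_right (hdisj : PairwiseVertexDisjoint G P)
    (hQ : IsInternalStrand G P i j Q) (hjk : j ≠ k) (hki : k ≠ i) {c : V}
    {w₁ : G.Walk Q.first c} {w₂ : G.Walk c Q.last} (hw : w₁.append w₂ = Q.walk)
    (hc : c ∈ (P k).interior) (hw₂ : ∀ x ∈ w₂.support, x ∈ (P k).vertexSet → x = c) :
    ∃ Q' : InducedPath G, IsInternalStrand G P j k Q' ∧ Q'.walk.length < Q.walk.length := by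
  obtain ⟨Q', hQ', hlen⟩ := hQ.reverse.exists_shorter_of_append hdisj hjk hki
    (w₁ := w₂.reverse) (w₂ := w₁.reverse) (by simp [InducedPath.reverse,
      InducedPath.ofIsChordless, ← hw, Walk.reverse_append]) hc (by simpa using hw₂)
  exact ⟨Q', hQ', by simpa [InducedPath.reverse, InducedPath.ofIsChordless] using hlen⟩

lemma IsInternalStrand.exists_shorter_of_mem_edgeSet [Finite V] (hG : IsBlockGraph G)
    (hdisj : PairwiseVertexDisjoint G P) (hQ : IsInternalStrand G P i j Q) {e : Sym2 V}
    (heQ : e ∈ Q.edgeSet) (heP : e ∈ (P k).edgeSet) :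
    ∃ (i' j' : Fin ℓ) (Q' : InducedPath G), IsInternalStrand G P i' j' Q' ∧
      Q'.walk.length < Q.walk.length := by
  obtain ⟨x, y⟩ := e
  obtain ⟨-, -, -, -, hi, hj, hnc⟩ := id hQ
  have hxy : x ≠ y := (Q.walk.adj_of_mem_edges heQ).ne
  have hxQ : x ∈ Q.walk.support := Q.walk.fst_mem_support_of_mem_edges heQ
  have hyQ : y ∈ Q.walk.support := Q.walk.snd_mem_support_of_mem_edges heQ
  have hxk : x ∈ (P k).vertexSet := (P k).walk.fst_mem_support_of_mem_edges heP
  have hyk : y ∈ (P k).vertexSet := (P k).walk.snd_mem_support_of_mem_edges heP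
  have hki : k ≠ i := by
    rintro rfl
    exact hxy ((hi.subset ⟨hxQ, hxk⟩).trans (hi.subset ⟨hyQ, hyk⟩).symm)
  have hkj : k ≠ j := by
    rintro rfl
    exact hxy ((hj.subset ⟨hxQ, hxk⟩).trans (hj.subset ⟨hyQ, hyk⟩).symm)
  obtain ⟨u, v, w₁, s, w₃, hw, hu, hv, hw₁, hw₃, hs⟩ :=
    Q.walk.exists_append_append_eq_of_mem (P k).vertexSet ⟨x, hxQ, hxk⟩
  by_cases hu' : u ∈ (P k).interior
  · exact ⟨i, k, hQ.exists_shorter_of_append hdisj hki.symm hkj hw hu' hw₁⟩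
  by_cases hv' : v ∈ (P k).interior
  · exact ⟨j, k, hQ.exists_shorter_of_append_right hdisj hkj.symm hki (w₁ := w₁.append s)
      (by rw [← hw, Walk.append_assoc]) hv' hw₃⟩
  have hsub : s.IsSubwalk Q.walk := ⟨w₁, w₃, by rw [← hw, Walk.append_assoc]⟩
  have huv : u ≠ v := by
    rintro rfl
    have hsu := Walk.nil_iff_support_eq.mp
      (Walk.isPath_iff_nil.mp (Walk.isPath_of_isSubwalk hsub Q.isPath))
    have hx := hs x hxQ hxk
    have hy := hs y hyQ hyk
    simp only [hsu, List.mem_singleton] at hx hy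
    exact hxy (hx.trans hy.symm)
  exact (hnc k (hG.pathContains_of_isSubwalk hsub
    (InducedPath.mem_boundary_of_notMem_interior hu hu')
    (InducedPath.mem_boundary_of_notMem_interior hv hv') huv)).elim

end InternalStrand

theorem blockGraph_internalStrand_edgeDisjoint_general {V : Type*} [Fintype V]
    (G : SimpleGraph V) (hBG : IsBlockGraph G) (ℓ : ℕ) (P : Fin ℓ → InducedPath G)
    (hdisj : PairwiseVertexDisjoint G P)
    (h : ∃ i j Q, IsInternalStrand G P i j Q) :
    ∃ i j Q, IsInternalStrand G P i j Q ∧ Disjoint Q.edgeSet (famEdges G P) := by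
  classical
  have hex : ∃ n, ∃ i j Q, IsInternalStrand G P i j Q ∧ Q.walk.length = n :=
    let ⟨i, j, Q, hQ⟩ := h; ⟨_, i, j, Q, hQ, rfl⟩
  obtain ⟨i, j, Q, hQ, hlen⟩ := Nat.find_spec hex
  refine ⟨i, j, Q, hQ, Set.disjoint_left.mpr fun e heQ heP => ?_⟩
  obtain ⟨k, hek⟩ := Set.mem_iUnion.mp heP
  obtain ⟨i', j', Q', hQ', hlt⟩ := hQ.exists_shorter_of_mem_edgeSet hBG hdisj heQ hek
  exact Nat.find_min hex (hlen ▸ hlt) ⟨i', j', Q', hQ', rfl⟩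

/-- **Theorem (Statement 16).** If `P_ind` contains an internal strand, then it
contains an internal strand which is edge-disjoint from the family `P`. -/
theorem blockGraph_internalStrand_edgeDisjoint {V : Type*} [Fintype V] [DecidableEq V]
    (G : SimpleGraph V) (hBG : IsBlockGraph G) (ℓ : ℕ) (P : Fin ℓ → InducedPath G)
    (hdisj : PairwiseVertexDisjoint G P)
    (h : ∃ i j Q, IsInternalStrand G P i j Q) :
    ∃ i j Q, IsInternalStrand G P i j Q ∧ Disjoint Q.edgeSet (famEdges G P) :=
  blockGraph_internalStrand_edgeDisjoint_general G hBG ℓ P hdisj h
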